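/- Let (X,μ,T) be a topological dynamical system with Borel probability measure μ. Then (X,T) is μ-mean equicontinuous (for every κ > 0 there is a compact M with μ(M) > 1-κ on which the Besicovitch projection f_b is continuous) if and only if there exists a set X' ⊆ X with μ(X') = 1 such that the quotient metric space (X'/d_b, d_b) is separable. -/

import Mathlib

open Filter Metric Set
open scoped Classical

noncomputable def lowerDensity (S : Set ℕ) : ℝ :=
  Filter.atTop.liminf (fun n => (((Finset.range (n + 1)).filter (fun i => i ∈ S)).card : ℝ) / (n + 1))

noncomputable def upperDensity (S : Set ℕ) : ℝ :=
  Filter.atTop.limsup (fun n => (((Finset.range (n + 1)).filter (fun i => i ∈ S)).card : ℝ) / (n + 1))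

noncomputable def besicovitch {X : Type*} [MetricSpace X] (T : X → X) (x y : X) : ℝ :=
  sInf {δ : ℝ | 0 < δ ∧ upperDensity {i : ℕ | δ < dist (T^[i] x) (T^[i] y)} < δ}

open MeasureTheory
open scoped ENNReal

/-!
If `f_b` is continuous on compact sets `M` of measure arbitrarily close to one, the
union of countable dense subsets of these `M` is `d_b`-dense in their union, a set of full measure.
Conversely, if a countable set `D` is `d_b`-dense in a set of full measure, Lusin's theorem applied
to the Borel map `x ↦ (d_b(x, y))_{y ∈ D}` into the second countable space `D → ℝ` yields compact
sets of measure close to one on which it is continuous, and on such a set `d_b` itself is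
continuous, because `d_b(x, z) ≤ d_b(x, y) + d_b(z, y)` with `y ∈ D` close to `x`.
-/

section Lusin

variable {α β : Type*} [TopologicalSpace α] [MeasurableSpace α] [OpensMeasurableSpace α]
  {μ : Measure α} [μ.WeaklyRegular] [IsFiniteMeasure μ]

theorem MeasurableSet.exists_isClosed_isOpen_inter_eq {t : Set α} (ht : MeasurableSet t)
    {ε : ℝ≥0∞} (hε : ε ≠ 0) :
    ∃ C, IsClosed C ∧ μ Cᶜ < ε ∧ ∃ u, IsOpen u ∧ t ∩ C = u ∩ C := by
  have hε2 := (ENNReal.half_pos hε).ne'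
  obtain ⟨A, hAt, hA, hAμ⟩ := ht.exists_isClosed_sdiff_lt (measure_ne_top μ t) hε2
  obtain ⟨A', hA't, hA', hA'μ⟩ := ht.compl.exists_isClosed_sdiff_lt (measure_ne_top μ tᶜ) hε2
  refine ⟨A ∪ A', hA.union hA', ?_, A'ᶜ, hA'.isOpen_compl, ?_⟩
  · have hsub : (A ∪ A')ᶜ ⊆ (t \ A) ∪ (tᶜ \ A') := by
      intro x hx
      by_cases hxt : x ∈ t <;> simp_all
    calc μ (A ∪ A')ᶜ ≤ μ (t \ A) + μ (tᶜ \ A') := (measure_mono hsub).trans (measure_union_le _ _)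
      _ < ε / 2 + ε / 2 := ENNReal.add_lt_add hAμ hA'μ
      _ = ε := ENNReal.add_halves ε
  · ext x
    simp only [mem_inter_iff, mem_union, mem_compl_iff]
    constructor
    · rintro ⟨hxt, hx⟩
      exact ⟨fun hxA' => hA't hxA' hxt, hx⟩
    · rintro ⟨hxA', hx⟩
      exact ⟨hAt (hx.resolve_right hxA'), hx⟩

variable [TopologicalSpace β] [SecondCountableTopology β] [MeasurableSpace β]
  [OpensMeasurableSpace β]

/-- Lusin's theorem: the preimage of each of the countably many basic open sets is made relatively
open by discarding a set of small measure. -/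
theorem Measurable.exists_isClosed_subset_continuousOn {f : α → β} (hf : Measurable f)
    {s : Set α} (hs : MeasurableSet s) {ε : ℝ≥0∞} (hε : ε ≠ 0) :
    ∃ F ⊆ s, IsClosed F ∧ μ (s \ F) < ε ∧ ContinuousOn f F := by
  obtain ⟨B, hBc, -, hB⟩ := TopologicalSpace.exists_countable_basis β
  have := hBc.to_subtype
  have hε2 := (ENNReal.half_pos hε).ne'
  obtain ⟨δ, hδ, hδε⟩ := ENNReal.exists_pos_sum_of_countable' hε2 B
  choose C hC hCμ u hu hCu using fun U : B =>
    (hf (hB.isOpen U.2).measurableSet).exists_isClosed_isOpen_inter_eq (μ := μ) (hδ U).ne'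
  obtain ⟨C₀, hC₀s, hC₀, hC₀μ⟩ := hs.exists_isClosed_sdiff_lt (measure_ne_top μ s) hε2
  refine ⟨C₀ ∩ ⋂ U, C U, inter_subset_left.trans hC₀s, hC₀.inter (isClosed_iInter hC), ?_, ?_⟩
  · have hsub : s \ (C₀ ∩ ⋂ U, C U) ⊆ (s \ C₀) ∪ ⋃ U, (C U)ᶜ := by
      rw [sdiff_inter, ← compl_iInter]
      exact union_subset_union_right _ fun x hx => hx.2
    calc μ (s \ (C₀ ∩ ⋂ U, C U)) ≤ μ (s \ C₀) + μ (⋃ U, (C U)ᶜ) :=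
          (measure_mono hsub).trans (measure_union_le _ _)
      _ < ε / 2 + ε / 2 := ENNReal.add_lt_add hC₀μ <| (measure_iUnion_le _).trans_lt <|
          (ENNReal.tsum_le_tsum fun U => (hCμ U).le).trans_lt hδε
      _ = ε := ENNReal.add_halves ε
  · rw [hB.continuousOn_iff]
    intro U hU
    have hsub : C₀ ∩ ⋂ U, C U ⊆ C ⟨U, hU⟩ := inter_subset_right.trans (iInter_subset _ _)
    refine ⟨u ⟨U, hU⟩, hu _, ?_⟩
    calc f ⁻¹' U ∩ (C₀ ∩ ⋂ U, C U) = f ⁻¹' U ∩ C ⟨U, hU⟩ ∩ (C₀ ∩ ⋂ U, C U) := by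
          rw [inter_assoc, inter_eq_right.2 hsub]
      _ = u ⟨U, hU⟩ ∩ C ⟨U, hU⟩ ∩ (C₀ ∩ ⋂ U, C U) := congrArg (· ∩ _) (hCu ⟨U, hU⟩)
      _ = u ⟨U, hU⟩ ∩ (C₀ ∩ ⋂ U, C U) := by rw [inter_assoc, inter_eq_right.2 hsub]

end Lusin

section Density

noncomputable def partialDensity (S : Set ℕ) (n : ℕ) : ℝ :=
  (((Finset.range (n + 1)).filter (fun i => i ∈ S)).card : ℝ) / (n + 1)

theorem upperDensity_eq_limsup (S : Set ℕ) :
    upperDensity S = limsup (partialDensity S) atTop := rfl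

theorem partialDensity_nonneg (S : Set ℕ) (n : ℕ) : 0 ≤ partialDensity S n := by
  unfold partialDensity; positivity

theorem partialDensity_le_one (S : Set ℕ) (n : ℕ) : partialDensity S n ≤ 1 := by
  unfold partialDensity
  rw [div_le_one (by positivity)]
  exact_mod_cast (Finset.card_filter_le _ _).trans (Finset.card_range (n + 1)).le

theorem isBoundedUnder_le_partialDensity (S : Set ℕ) :
    IsBoundedUnder (· ≤ ·) atTop (partialDensity S) :=
  isBoundedUnder_of ⟨1, partialDensity_le_one S⟩

theorem isBoundedUnder_ge_partialDensity (S : Set ℕ) :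
    IsBoundedUnder (· ≥ ·) atTop (partialDensity S) :=
  isBoundedUnder_of ⟨0, partialDensity_nonneg S⟩

theorem partialDensity_mono {A B : Set ℕ} (h : A ⊆ B) (n : ℕ) :
    partialDensity A n ≤ partialDensity B n := by
  unfold partialDensity
  gcongr

theorem partialDensity_union_le (A B : Set ℕ) (n : ℕ) :
    partialDensity (A ∪ B) n ≤ partialDensity A n + partialDensity B n := by
  unfold partialDensity
  rw [← add_div]
  gcongr
  rw [← Nat.cast_add, Nat.cast_le]
  refine (Finset.card_le_card fun i hi => ?_).trans (Finset.card_union_le _ _)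
  simp only [Finset.mem_union, Finset.mem_filter, mem_union] at hi ⊢
  tauto

theorem upperDensity_mono {A B : Set ℕ} (h : A ⊆ B) : upperDensity A ≤ upperDensity B :=
  limsup_le_limsup (Eventually.of_forall (partialDensity_mono h))
    (isBoundedUnder_ge_partialDensity A).isCoboundedUnder_le (isBoundedUnder_le_partialDensity B)

theorem upperDensity_union_le (A B : Set ℕ) :
    upperDensity (A ∪ B) ≤ upperDensity A + upperDensity B := by
  have hsum : IsBoundedUnder (· ≤ ·) atTop (partialDensity A + partialDensity B) :=
    isBoundedUnder_of ⟨2, fun n =>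
      (add_le_add (partialDensity_le_one A n) (partialDensity_le_one B n)).trans_eq
        one_add_one_eq_two⟩
  calc upperDensity (A ∪ B) ≤ limsup (partialDensity A + partialDensity B) atTop :=
        limsup_le_limsup (Eventually.of_forall (partialDensity_union_le A B))
          (isBoundedUnder_ge_partialDensity _).isCoboundedUnder_le hsum
    _ ≤ upperDensity A + upperDensity B :=
        limsup_add_le (isBoundedUnder_ge_partialDensity A) (isBoundedUnder_le_partialDensity A)
          (isBoundedUnder_ge_partialDensity B).isCoboundedUnder_le
          (isBoundedUnder_le_partialDensity B)

theorem upperDensity_empty : upperDensity ∅ = 0 := by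
  have h : partialDensity ∅ = 0 := funext fun n => by simp [partialDensity]
  rw [upperDensity_eq_limsup, h]
  exact limsup_const 0

theorem measurable_upperDensity {α : Type*} [MeasurableSpace α] {S : α → Set ℕ}
    (hS : ∀ i, MeasurableSet {a | i ∈ S a}) : Measurable fun a => upperDensity (S a) := by
  refine Measurable.limsup fun n => ?_
  simp only [Finset.card_filter, Nat.cast_sum, Nat.cast_ite, Nat.cast_one, Nat.cast_zero]
  exact (Finset.measurable_sum _ fun i _ => Measurable.ite (hS i) measurable_const
    measurable_const).div_const _

end Density

section Besicovitch

variable {X : Type*} [MetricSpace X] (T : X → X)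

theorem besicovitch_le {x y : X} {δ : ℝ} (hδ : 0 < δ)
    (h : upperDensity {i : ℕ | δ < dist (T^[i] x) (T^[i] y)} < δ) : besicovitch T x y ≤ δ :=
  csInf_le ⟨0, fun _ hδ' => hδ'.1.le⟩ ⟨hδ, h⟩

theorem upperDensity_setOf_dist_lt_of_le {x y : X} {δ δ' : ℝ} (hδδ' : δ ≤ δ')
    (h : upperDensity {i : ℕ | δ < dist (T^[i] x) (T^[i] y)} < δ) :
    upperDensity {i : ℕ | δ' < dist (T^[i] x) (T^[i] y)} < δ' :=
  ((upperDensity_mono fun _ hi => hδδ'.trans_lt hi).trans_lt h).trans_le hδδ'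

theorem besicovitch_comm (x y : X) : besicovitch T x y = besicovitch T y x := by
  simp only [besicovitch, dist_comm]

variable [BoundedSpace X]

theorem besicovitch_lt_iff {x y : X} {ε : ℝ} :
    besicovitch T x y < ε ↔
      ∃ δ < ε, 0 < δ ∧ upperDensity {i : ℕ | δ < dist (T^[i] x) (T^[i] y)} < δ := by
  have hne :
      {δ : ℝ | 0 < δ ∧ upperDensity {i : ℕ | δ < dist (T^[i] x) (T^[i] y)} < δ}.Nonempty := by
    refine ⟨diam (univ : Set X) + 1, by positivity, ?_⟩
    have hfar : {i : ℕ | diam (univ : Set X) + 1 < dist (T^[i] x) (T^[i] y)} = ∅ :=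
      eq_empty_of_forall_notMem fun i hi => by
        have := dist_le_diam_of_mem (Bornology.isBounded_univ.2 ‹_›) (mem_univ (T^[i] x))
          (mem_univ (T^[i] y))
        exact (lt_irrefl _) ((hi.trans_le this).trans (lt_add_one _))
    rw [hfar, upperDensity_empty]
    positivity
  rw [besicovitch, csInf_lt_iff ⟨0, fun _ hδ => hδ.1.le⟩ hne]
  exact ⟨fun ⟨δ, hδ, hδε⟩ => ⟨δ, hδε, hδ⟩, fun ⟨δ, hδε, hδ⟩ => ⟨δ, hδ, hδε⟩⟩

theorem upperDensity_lt_of_besicovitch_lt {x y : X} {ε : ℝ} (h : besicovitch T x y < ε) :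
    upperDensity {i : ℕ | ε < dist (T^[i] x) (T^[i] y)} < ε := by
  obtain ⟨δ, hδε, -, hδ⟩ := (besicovitch_lt_iff T).1 h
  exact upperDensity_setOf_dist_lt_of_le T hδε.le hδ

theorem besicovitch_triangle (x y z : X) :
    besicovitch T x z ≤ besicovitch T x y + besicovitch T y z := by
  refine le_of_forall_pos_lt_add fun ε hε => ?_
  obtain ⟨δ₁, hδ₁ε, hδ₁, h₁⟩ := (besicovitch_lt_iff T).1
    (lt_add_of_pos_right (besicovitch T x y) (half_pos hε))
  obtain ⟨δ₂, hδ₂ε, hδ₂, h₂⟩ := (besicovitch_lt_iff T).1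
    (lt_add_of_pos_right (besicovitch T y z) (half_pos hε))
  have hfar : {i : ℕ | δ₁ + δ₂ < dist (T^[i] x) (T^[i] z)} ⊆
      {i : ℕ | δ₁ < dist (T^[i] x) (T^[i] y)} ∪ {i : ℕ | δ₂ < dist (T^[i] y) (T^[i] z)} := by
    intro i hi
    by_contra hcon
    simp only [mem_union, mem_ofPred_eq, not_or, not_lt] at hi hcon
    linarith [dist_triangle (T^[i] x) (T^[i] y) (T^[i] z)]
  have hdens : upperDensity {i : ℕ | δ₁ + δ₂ < dist (T^[i] x) (T^[i] z)} < δ₁ + δ₂ :=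
    ((upperDensity_mono hfar).trans (upperDensity_union_le _ _)).trans_lt (add_lt_add h₁ h₂)
  linarith [besicovitch_le T (add_pos hδ₁ hδ₂) hdens]

theorem measurable_besicovitch_left [MeasurableSpace X] [OpensMeasurableSpace X]
    (hT : Continuous T) (y : X) : Measurable fun x => besicovitch T x y := by
  refine measurable_of_Iio fun ε => ?_
  have hrat : (fun x => besicovitch T x y) ⁻¹' Iio ε = ⋃ q : ℚ, ⋃ (_ : 0 < (q : ℝ) ∧ (q : ℝ) < ε),
      {x | upperDensity {i : ℕ | (q : ℝ) < dist (T^[i] x) (T^[i] y)} < q} := by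
    ext x
    simp only [mem_preimage, mem_Iio, mem_iUnion, mem_ofPred_eq, besicovitch_lt_iff T]
    constructor
    · rintro ⟨δ, hδε, hδ, h⟩
      obtain ⟨q, hδq, hqε⟩ := exists_rat_btwn hδε
      exact ⟨q, ⟨hδ.trans hδq, hqε⟩, upperDensity_setOf_dist_lt_of_le T hδq.le h⟩
    · rintro ⟨q, ⟨hq, hqε⟩, h⟩
      exact ⟨q, hqε, hq, h⟩
  rw [hrat]
  refine MeasurableSet.iUnion fun q => MeasurableSet.iUnion fun _ => measurableSet_lt ?_
    measurable_const
  exact measurable_upperDensity fun i =>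
    (isOpen_lt continuous_const ((hT.iterate i).dist continuous_const)).measurableSet

end Besicovitch

section MeanEquicontinuity

variable {X : Type*} [MetricSpace X] (T : X → X)

def MeanEquicontinuousOn (M : Set X) : Prop :=
  ∀ x ∈ M, ∀ ε > (0 : ℝ), ∃ δ > (0 : ℝ), ∀ y ∈ M, dist x y ≤ δ →
    upperDensity {i : ℕ | ε < dist (T^[i] x) (T^[i] y)} < ε

theorem MeanEquicontinuousOn.exists_countable_besicovitch_dense {M : Set X}
    (hM : MeanEquicontinuousOn T M) (hMs : TopologicalSpace.IsSeparable M) :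
    ∃ D ⊆ M, D.Countable ∧ ∀ x ∈ M, ∀ ε > (0 : ℝ), ∃ y ∈ D, besicovitch T x y < ε := by
  obtain ⟨D, hDM, hDc, hMD⟩ := hMs.exists_countable_dense_subset
  refine ⟨D, hDM, hDc, fun x hx ε hε => ?_⟩
  obtain ⟨δ, hδ, hdens⟩ := hM x hx (ε / 2) (half_pos hε)
  obtain ⟨y, hyD, hxy⟩ := Metric.mem_closure_iff.1 (hMD hx) δ hδ
  exact ⟨y, hyD,
    (besicovitch_le T (half_pos hε) (hdens y (hDM hyD) hxy.le)).trans_lt (half_lt_self hε)⟩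

theorem meanEquicontinuousOn_of_continuousOn_besicovitch [BoundedSpace X] {M D : Set X}
    (hMD : ∀ x ∈ M, ∀ ε > (0 : ℝ), ∃ y ∈ D, besicovitch T x y < ε)
    (hcont : ∀ y ∈ D, ContinuousOn (fun x => besicovitch T x y) M) :
    MeanEquicontinuousOn T M := by
  intro x hx ε hε
  obtain ⟨y, hyD, hxy⟩ := hMD x hx (ε / 3) (by positivity)
  obtain ⟨δ, hδ, hnear⟩ := Metric.continuousOn_iff.1 (hcont y hyD) x hx (ε / 3) (by positivity)
  refine ⟨δ / 2, half_pos hδ, fun z hz hxz => upperDensity_lt_of_besicovitch_lt T ?_⟩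
  have hzy : besicovitch T z y < besicovitch T x y + ε / 3 := by
    have := hnear z hz (by rw [dist_comm]; linarith)
    rw [Real.dist_eq, abs_lt] at this
    linarith
  calc besicovitch T x z ≤ besicovitch T x y + besicovitch T y z := besicovitch_triangle T x y z
    _ = besicovitch T x y + besicovitch T z y := by rw [besicovitch_comm T y z]
    _ < ε := by linarith

theorem exists_isCompact_meanEquicontinuousOn [CompactSpace X] [MeasurableSpace X]
    [BorelSpace X] (hT : Continuous T) (μ : Measure X) [IsFiniteMeasure μ] {X' D : Set X}
    (hDc : D.Countable) (hX'D : ∀ x ∈ X', ∀ ε > (0 : ℝ), ∃ y ∈ D, besicovitch T x y < ε)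
    {ε : ℝ≥0∞} (hε : ε ≠ 0) :
    ∃ M : Set X, IsCompact M ∧ μ (X' \ M) < ε ∧ MeanEquicontinuousOn T M := by
  have := hDc.to_subtype
  -- `X'` need not be measurable, so Lusin's theorem is applied on the Borel set `Z ⊇ X'`.
  set Z := {x | ∀ n : ℕ, ∃ y ∈ D, besicovitch T x y < 1 / (n + 1)}
  have hZ : MeasurableSet Z := by
    have hZ_eq : Z = ⋂ n : ℕ, ⋃ y ∈ D, {x | besicovitch T x y < 1 / (n + 1)} := by
      ext x
      simp [Z]
    rw [hZ_eq]
    exact MeasurableSet.iInter fun n => MeasurableSet.biUnion hDc fun y _ =>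
      measurableSet_lt (measurable_besicovitch_left T hT y) measurable_const
  have hX'Z : X' ⊆ Z := fun x hx n => hX'D x hx _ Nat.one_div_pos_of_nat
  have hΦ : Measurable fun x (y : D) => besicovitch T x y :=
    measurable_pi_lambda _ fun y => measurable_besicovitch_left T hT y
  obtain ⟨M, hMZ, hM, hμ, hcont⟩ := hΦ.exists_isClosed_subset_continuousOn (μ := μ) hZ hε
  refine ⟨M, hM.isCompact, (measure_mono (sdiff_subset_sdiff_left hX'Z)).trans_lt hμ,
    meanEquicontinuousOn_of_continuousOn_besicovitch T (fun x hx ε hε => ?_)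
      fun y hy => (continuous_apply (⟨y, hy⟩ : D)).comp_continuousOn hcont⟩
  obtain ⟨n, hn⟩ := exists_nat_one_div_lt hε
  obtain ⟨y, hy, hxy⟩ := hMZ hx n
  exact ⟨y, hy, hxy.trans hn⟩

end MeanEquicontinuity

theorem muMeanEq_iff_separable {X : Type*} [MetricSpace X] [CompactSpace X]
    [MeasurableSpace X] [BorelSpace X]
    (T : X → X) (hT : Continuous T) (μ : Measure X) [IsProbabilityMeasure μ] :
    (∀ κ > (0 : ℝ), ∃ M : Set X, IsCompact M ∧ ENNReal.ofReal (1 - κ) < μ M ∧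
      ∀ x ∈ M, ∀ ε > (0 : ℝ), ∃ δ > (0 : ℝ), ∀ y ∈ M, dist x y ≤ δ →
        upperDensity {i : ℕ | ε < dist (T^[i] x) (T^[i] y)} < ε) ↔
    (∃ X' : Set X, μ X' = 1 ∧ ∃ D ⊆ X', D.Countable ∧
      ∀ x ∈ X', ∀ ε > (0 : ℝ), ∃ y ∈ D, besicovitch T x y < ε) := by
  constructor
  · intro h
    choose M hMc hMμ hMeq using fun n : ℕ => h (1 / (n + 1)) Nat.one_div_pos_of_nat
    choose D hDM hDc hMD using fun n =>
      MeanEquicontinuousOn.exists_countable_besicovitch_dense T (hMeq n) (hMc n).isSeparable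
    refine ⟨⋃ n, M n, ?_, ⋃ n, D n, iUnion_mono hDM, countable_iUnion hDc, ?_⟩
    · have hlim : Tendsto (fun n : ℕ => ENNReal.ofReal (1 - 1 / (n + 1))) atTop (nhds 1) := by
        simpa using ENNReal.tendsto_ofReal
          ((tendsto_const_nhds (x := (1 : ℝ))).sub tendsto_one_div_add_atTop_nhds_zero_nat)
      exact le_antisymm prob_le_one
        (le_of_tendsto' hlim fun n => (hMμ n).le.trans (measure_mono (subset_iUnion M n)))
    · intro x hx ε hε
      obtain ⟨n, hxn⟩ := mem_iUnion.1 hx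
      obtain ⟨y, hy, hxy⟩ := hMD n x hxn ε hε
      exact ⟨y, mem_iUnion.2 ⟨n, hy⟩, hxy⟩
  · rintro ⟨X', hX', D, -, hDc, hX'D⟩ κ hκ
    have hlt : ENNReal.ofReal (1 - κ) < 1 := ENNReal.ofReal_lt_one.2 (by linarith)
    obtain ⟨M, hMc, hμ, hMeq⟩ :=
      exists_isCompact_meanEquicontinuousOn T hT μ hDc hX'D (tsub_pos_of_lt hlt).ne'
    have hμM : 1 - μ M < 1 - ENNReal.ofReal (1 - κ) :=
      calc 1 - μ M = μ X' - μ M := by rw [hX']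
        _ ≤ μ (X' \ M) := le_measure_sdiff
        _ < 1 - ENNReal.ofReal (1 - κ) := hμ
    exact ⟨M, hMc, lt_of_not_ge fun h => (tsub_le_tsub_left h 1).not_gt hμM, hMeq⟩
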